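/- Let G be a finite simple graph that is a domain, and let H_h, H_i, H_j be three pairwise distinct connected components of G^{0-1}, with vertex bipartitions A_h ∪ B_h, A_i ∪ B_i, A_j ∪ B_j respectively. If G contains an edge between a vertex of A_h and a vertex of A_i, and an edge between a vertex of A_h and a vertex of A_j, then G contains no edge between a vertex of B_i and a vertex of B_j. -/

import Mathlib

variable {V : Type*} [Fintype V] [DecidableEq V]

/-- For `k ∈ ℕ`, a `k`-cover of `G` is a function from the vertices of `G` to `ℕ` that is
not identically zero and whose values at the two endpoints of any edge sum to at least `k`. -/
def IsCover (G : SimpleGraph V) (k : ℕ) (a : V → ℕ) : Prop :=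
  a ≠ 0 ∧ ∀ i j : V, G.Adj i j → k ≤ a i + a j

/-- A `k`-cover is basic if it is not the pointwise sum of a `k`-cover and a `0`-cover. -/
def IsBasicCover (G : SimpleGraph V) (k : ℕ) (a : V → ℕ) : Prop :=
  IsCover G k a ∧ ¬ ∃ b c : V → ℕ, IsCover G k b ∧ IsCover G 0 c ∧ a = b + c

/-- `G` is a domain if for all `s, t` with `s + t ≥ 1`, the pointwise sum of any `s` basic
`1`-covers and any `t` basic `2`-covers of `G` is a basic `(s + 2t)`-cover. -/
def IsGraphDomain (G : SimpleGraph V) : Prop :=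
  ∀ s t : ℕ, 1 ≤ s + t → ∀ f : Fin s → V → ℕ, ∀ g : Fin t → V → ℕ,
    (∀ p, IsBasicCover G 1 (f p)) → (∀ q, IsBasicCover G 2 (g q)) →
    IsBasicCover G (s + 2 * t) ((∑ p, f p) + (∑ q, g q))

/-- `G` is unmixed if all basic `1`-covers of `G` have the same norm. -/
def IsUnmixed (G : SimpleGraph V) : Prop :=
  ∀ a b : V → ℕ, IsBasicCover G 1 a → IsBasicCover G 1 b → ∑ v, a v = ∑ v, b v

/-- `G` satisfies WSC if it has at least one edge and every non-isolated vertex `i` has a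
neighbour `j` such that any neighbour of `i` is adjacent to any neighbour of `j`. -/
def SatisfiesWSC (G : SimpleGraph V) : Prop :=
  (∃ i j : V, G.Adj i j) ∧
    ∀ i : V, (∃ x, G.Adj i x) →
      ∃ j : V, G.Adj i j ∧ ∀ i' j' : V, G.Adj i i' → G.Adj j j' → G.Adj i' j'

/-- `G` satisfies SC if for every edge `{i, j}`, every neighbour `i'` of `i` and every
neighbour `j'` of `j`, one has `i' ≠ j'` and `{i', j'}` is an edge. -/
def SatisfiesSC (G : SimpleGraph V) : Prop :=
  ∀ i j i' j' : V, G.Adj i j → G.Adj i i' → G.Adj j j' → i' ≠ j' ∧ G.Adj i' j'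

/-- `G` satisfies MSC if the set of non-isolated vertices of `G` is nonempty and carries a
perfect matching `M` (a matching of `G` whose vertex set is exactly the set of non-isolated
vertices) such that for every edge `{i, j}` of `M`, every neighbour `i'` of `i` in `G` and
every neighbour `j'` of `j` in `G`, `{i', j'}` is an edge of `G`. -/
def SatisfiesMSC (G : SimpleGraph V) : Prop :=
  ∃ M : G.Subgraph, M.verts = {v : V | ∃ w, G.Adj v w} ∧ M.verts.Nonempty ∧
    M.IsMatching ∧
    ∀ i j : V, M.Adj i j → ∀ i' j' : V, G.Adj i i' → G.Adj j j' → G.Adj i' j'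

/-- The graph `G^{0-1}`: its edges are the edges `{i, j}` of `G` such that `a i + a j = 1`
for every basic `1`-cover `a` of `G`.  (Its vertex set is interpreted as the set of
non-isolated vertices of `G`; here it is defined on all of `V`, and the vertices of `G`
that are isolated stay isolated, so they can be excluded explicitly when needed.) -/
def ZeroOne (G : SimpleGraph V) : SimpleGraph V where
  Adj i j := G.Adj i j ∧ ∀ a : V → ℕ, IsBasicCover G 1 a → a i + a j = 1
  symm := by
    constructor
    intro i j h
    exact ⟨h.1.symm, fun a ha => by rw [add_comm]; exact h.2 a ha⟩
  loopless := by
    constructor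
    intro i h
    exact G.loopless.irrefl i h.1

/-- `A ∪ B` is a vertex bipartition of the connected component `C` of `H`, and the edges of
`H` inside `C` are exactly the pairs `{x, y}` with `x ∈ A` and `y ∈ B` (so the component is
a complete bipartite graph on `A ∪ B`). -/
def IsCompBipartition (H : SimpleGraph V) (C : H.ConnectedComponent) (A B : Set V) : Prop :=
  A ∪ B = C.supp ∧ Disjoint A B ∧
    ∀ x ∈ C.supp, ∀ y ∈ C.supp,
      (H.Adj x y ↔ (x ∈ A ∧ y ∈ B) ∨ (x ∈ B ∧ y ∈ A))

/-- The graph `G⁺` obtained from `G` by attaching a pendant vertex to each vertex of `G`: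
`Sum.inl v` is the original vertex `v`, and `Sum.inr v` is the pendant attached to `v`. -/
def GPlus (G : SimpleGraph V) : SimpleGraph (V ⊕ V) where
  Adj x y :=
    match x, y with
    | Sum.inl u, Sum.inl v => G.Adj u v
    | Sum.inl u, Sum.inr v => u = v
    | Sum.inr u, Sum.inl v => u = v
    | Sum.inr _, Sum.inr _ => False
  symm := by
    constructor
    rintro (u | u) (v | v) h
    · exact h.symm
    · exact h.symm
    · exact h.symm
    · exact h.elim
  loopless := by
    constructor
    rintro (u | u) h
    · exact G.loopless.irrefl u h
    · exact h

/-!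
Take a basic `1`-cover `a` below the cover that is `0` at an endpoint `x ∈ Ah` of the first
edge and `1` elsewhere. On a component of `G^{0-1}` with bipartition `A ∪ B`, every basic
`1`-cover satisfies `a y + a z = 1` for `y ∈ A`, `z ∈ B`, so it is constant on `A` (when `B`
is empty, `A` is a single vertex). Chasing the edges: `a x = 0` forces `a = 1` on `Ai`, so
`a = 0` on `Bi`; an edge between `Bi` and `Bj` forces `a = 1` on `Bj`, so `a = 0` on `Aj`; the
second edge then forces `a = 1` on `Ah`, contradicting `a x = 0`.
-/

section Covers

variable {G : SimpleGraph V} {k : ℕ}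

omit [DecidableEq V] in
theorem IsCover.exists_isBasicCover_le {c : V → ℕ} (hc : IsCover G k c) :
    ∃ a ≤ c, IsBasicCover G k a := by
  obtain ⟨a, ⟨hac, ha⟩, hmin⟩ := (measure fun b : V → ℕ => ∑ v, b v).wf.has_min
    {b | b ≤ c ∧ IsCover G k b} ⟨c, le_rfl, hc⟩
  refine ⟨a, hac, ha, ?_⟩
  rintro ⟨b, d, hb, hd, rfl⟩
  refine hmin b ⟨le_self_add.trans hac, hb⟩ ?_
  have hd_pos : 0 < ∑ v, d v :=
    Nat.pos_of_ne_zero fun h => hd.1 <| funext fun v => Finset.sum_eq_zero_iff.mp h v (by simp)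
  change ∑ v, b v < ∑ v, (b v + d v)
  rw [Finset.sum_add_distrib]
  omega

omit [Fintype V] in
theorem isCover_one_update_zero [Nontrivial V] (x : V) :
    IsCover G 1 (Function.update 1 x 0) := by
  refine ⟨fun h => ?_, fun i j hij => ?_⟩
  · obtain ⟨y, hy⟩ := exists_ne x
    simpa [hy] using congrFun h y
  · rcases eq_or_ne i x with rfl | hi
    · simp [hij.ne.symm]
    · simp [hi]

theorem exists_isBasicCover_one_eq_zero [Nontrivial V] (x : V) :
    ∃ a, IsBasicCover G 1 a ∧ a x = 0 := by
  obtain ⟨a, hle, ha⟩ := (isCover_one_update_zero (G := G) x).exists_isBasicCover_le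
  exact ⟨a, ha, Nat.eq_zero_of_le_zero (by simpa using hle x)⟩

end Covers

namespace IsCompBipartition

omit [Fintype V] [DecidableEq V]

variable {H : SimpleGraph V} {C : H.ConnectedComponent} {A B : Set V} {x y : V}

theorem adj (hb : IsCompBipartition H C A B) (hx : x ∈ A) (hy : y ∈ B) : H.Adj x y :=
  (hb.2.2 x (hb.1 ▸ Or.inl hx) y (hb.1 ▸ Or.inr hy)).2 (Or.inl ⟨hx, hy⟩)

theorem nonempty_right_of_ne (hb : IsCompBipartition H C A B) (hx : x ∈ A) (hy : y ∈ A)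
    (hne : x ≠ y) : B.Nonempty := by
  have hxC : x ∈ C.supp := hb.1 ▸ Or.inl hx
  have hyC : y ∈ C.supp := hb.1 ▸ Or.inl hy
  obtain ⟨w⟩ : H.Reachable x y := SimpleGraph.ConnectedComponent.exact (hxC.trans hyC.symm)
  have hadj := w.adj_snd (w.not_nil_of_ne hne)
  have hsndC : w.snd ∈ C.supp :=
    (SimpleGraph.ConnectedComponent.connectedComponentMk_eq_of_adj hadj).symm.trans hxC
  rcases (hb.2.2 x hxC _ hsndC).mp hadj with ⟨-, hsnd⟩ | ⟨hxB, -⟩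
  · exact ⟨_, hsnd⟩
  · exact absurd hxB (Set.disjoint_left.mp hb.2.1 hx)

variable {G : SimpleGraph V} {C : (ZeroOne G).ConnectedComponent} {a : V → ℕ}

theorem add_eq_one (hb : IsCompBipartition (ZeroOne G) C A B) (ha : IsBasicCover G 1 a)
    (hx : x ∈ A) (hy : y ∈ B) : a x + a y = 1 :=
  (hb.adj hx hy).2 a ha

theorem eq_of_mem_left (hb : IsCompBipartition (ZeroOne G) C A B) (ha : IsBasicCover G 1 a)
    (hx : x ∈ A) (hy : y ∈ A) : a x = a y := by
  rcases eq_or_ne x y with rfl | hne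
  · rfl
  obtain ⟨z, hz⟩ := hb.nonempty_right_of_ne hx hy hne
  have hxz := hb.add_eq_one ha hx hz
  have hyz := hb.add_eq_one ha hy hz
  omega

end IsCompBipartition

theorem no_edge_between_Bi_and_Bj_general (G : SimpleGraph V)
    (Ch Ci Cj : (ZeroOne G).ConnectedComponent)
    (Ah Bh Ai Bi Aj Bj : Set V)
    (hbh : IsCompBipartition (ZeroOne G) Ch Ah Bh)
    (hbi : IsCompBipartition (ZeroOne G) Ci Ai Bi)
    (hbj : IsCompBipartition (ZeroOne G) Cj Aj Bj)
    (hedge₁ : ∃ x ∈ Ah, ∃ y ∈ Ai, G.Adj x y)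
    (hedge₂ : ∃ x ∈ Ah, ∃ y ∈ Aj, G.Adj x y) :
    ¬ ∃ x ∈ Bi, ∃ y ∈ Bj, G.Adj x y := by
  rintro ⟨zi, hzi, zj, hzj, hz⟩
  obtain ⟨x, hx, yi, hyi, hxyi⟩ := hedge₁
  obtain ⟨x', hx', yj, hyj, hxyj⟩ := hedge₂
  have : Nontrivial V := nontrivial_of_ne _ _ hxyi.ne
  obtain ⟨a, ha, hax⟩ := exists_isBasicCover_one_eq_zero (G := G) x
  have h₁ := ha.1.2 _ _ hxyi
  have h₂ := ha.1.2 _ _ hz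
  have h₃ := ha.1.2 _ _ hxyj
  have hi := hbi.add_eq_one ha hyi hzi
  have hj := hbj.add_eq_one ha hyj hzj
  have hh := hbh.eq_of_mem_left ha hx hx'
  omega

/-- Let `G` be a domain and let `Hₕ, Hᵢ, Hⱼ` be three pairwise distinct
connected components of `G^{0-1}` with bipartitions `Ah ∪ Bh`, `Ai ∪ Bi`, `Aj ∪ Bj`.
If `G` has an edge between `Ah` and `Ai` and an edge between `Ah` and `Aj`, then `G` has
no edge between `Bi` and `Bj`. -/
theorem no_edge_between_Bi_and_Bj (G : SimpleGraph V) (hG : IsGraphDomain G)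
    (Ch Ci Cj : (ZeroOne G).ConnectedComponent)
    (hhi : Ch ≠ Ci) (hhj : Ch ≠ Cj) (hij : Ci ≠ Cj)
    (hsupph : Ch.supp ⊆ {v : V | ∃ w, G.Adj v w}) (hsuppi : Ci.supp ⊆ {v : V | ∃ w, G.Adj v w})
    (hsuppj : Cj.supp ⊆ {v : V | ∃ w, G.Adj v w})
    (Ah Bh Ai Bi Aj Bj : Set V)
    (hbh : IsCompBipartition (ZeroOne G) Ch Ah Bh)
    (hbi : IsCompBipartition (ZeroOne G) Ci Ai Bi)
    (hbj : IsCompBipartition (ZeroOne G) Cj Aj Bj)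
    (hedge₁ : ∃ x ∈ Ah, ∃ y ∈ Ai, G.Adj x y)
    (hedge₂ : ∃ x ∈ Ah, ∃ y ∈ Aj, G.Adj x y) :
    ¬ ∃ x ∈ Bi, ∃ y ∈ Bj, G.Adj x y :=
  no_edge_between_Bi_and_Bj_general G Ch Ci Cj Ah Bh Ai Bi Aj Bj hbh hbi hbj hedge₁ hedge₂
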